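/- Assume b = A x̄ + z, let δ' ∈ (0,1) and γ > (1+δ')/(1−δ'), let s̃ ≥ 1 be an integer with ρ₋(A, s̄+s̃) > 0, and let λ > 0 satisfy λ ≥ max{4, (γ+1)/((1−δ')γ − (1+δ'))} · ‖Aᵀz‖_∞. Suppose x̂ ∈ ℝⁿ satisfies ‖x̂_{S̄ᶜ}‖₀ ≤ s̃ and ω_λ(x̂) ≤ ε for some ε with 0 ≤ ε ≤ δ'λ, and suppose x* is a minimizer of φ_λ with ‖x*_{S̄ᶜ}‖₀ ≤ s̃. Then φ_λ(x̂) − φ_λ(x*) ≤ 4(1+γ)λ s̄ ε / ρ₋(A, s̄+s̃). -/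

import Mathlib

open scoped BigOperators
open Matrix

noncomputable section

namespace PGH

/-- Euclidean dot product on `Fin n → ℝ`. -/
def dot {n : ℕ} (x y : Fin n → ℝ) : ℝ := ∑ i, x i * y i

/-- Squared Euclidean norm. -/
def sqnorm {n : ℕ} (x : Fin n → ℝ) : ℝ := ∑ i, (x i) ^ 2

/-- Euclidean (ℓ₂) norm. -/
noncomputable def l2 {n : ℕ} (x : Fin n → ℝ) : ℝ := Real.sqrt (sqnorm x)

/-- ℓ₁ norm. -/
def l1 {n : ℕ} (x : Fin n → ℝ) : ℝ := ∑ i, |x i|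

/-- ℓ∞ norm (maximum absolute coordinate). -/
noncomputable def linf {n : ℕ} (x : Fin n → ℝ) : ℝ := ⨆ i, |x i|

/-- Support of a vector. -/
def supp {n : ℕ} (x : Fin n → ℝ) : Finset (Fin n) := Finset.univ.filter (fun i => x i ≠ 0)

/-- Number of nonzero coordinates. -/
def l0 {n : ℕ} (x : Fin n → ℝ) : ℕ := (supp x).card

/-- Number of nonzero coordinates within the index set `S`
(i.e. `‖x_S‖₀` for the restriction of `x` to `S`). -/
def l0on {n : ℕ} (S : Finset (Fin n)) (x : Fin n → ℝ) : ℕ :=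
  (S.filter (fun i => x i ≠ 0)).card

/-- ℓ₁ norm of the restriction of `x` to the index set `S`. -/
def l1on {n : ℕ} (S : Finset (Fin n)) (x : Fin n → ℝ) : ℝ := ∑ i ∈ S, |x i|

/-- Gradient of `f(x) = (1/2)‖Ax - b‖₂²`, namely `Aᵀ(Ax - b)`. -/
def grad {m n : ℕ} (A : Matrix (Fin m) (Fin n) ℝ) (b : Fin m → ℝ) (x : Fin n → ℝ) :
    Fin n → ℝ :=
  Aᵀ.mulVec (A.mulVec x - b)

/-- Least-squares objective `f(x) = (1/2)‖Ax - b‖₂²`. -/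
def fls {m n : ℕ} (A : Matrix (Fin m) (Fin n) ℝ) (b : Fin m → ℝ) (x : Fin n → ℝ) : ℝ :=
  sqnorm (A.mulVec x - b) / 2

/-- ℓ₁-regularized least-squares objective `φ_λ(x) = f(x) + λ‖x‖₁`. -/
def phi {m n : ℕ} (A : Matrix (Fin m) (Fin n) ℝ) (b : Fin m → ℝ) (lam : ℝ)
    (x : Fin n → ℝ) : ℝ :=
  fls A b x + lam * l1 x

/-- Restricted maximal eigenvalue `ρ₊(A, s)`. -/
noncomputable def rhoPlus {m n : ℕ} (A : Matrix (Fin m) (Fin n) ℝ) (s : ℕ) : ℝ :=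
  sSup {r | ∃ x : Fin n → ℝ, x ≠ 0 ∧ l0 x ≤ s ∧ r = sqnorm (A.mulVec x) / sqnorm x}

/-- Restricted minimal eigenvalue `ρ₋(A, s)`. -/
noncomputable def rhoMinus {m n : ℕ} (A : Matrix (Fin m) (Fin n) ℝ) (s : ℕ) : ℝ :=
  sInf {r | ∃ x : Fin n → ℝ, x ≠ 0 ∧ l0 x ≤ s ∧ r = sqnorm (A.mulVec x) / sqnorm x}

/-- `ξ` is a subgradient of the ℓ₁ norm at `x`. -/
def IsSubgrad {n : ℕ} (x ξ : Fin n → ℝ) : Prop :=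
  ∀ i, (x i ≠ 0 → ξ i = Real.sign (x i)) ∧ (x i = 0 → |ξ i| ≤ 1)

/-- Optimality residue `ω_λ(x) = min_{ξ ∈ ∂‖x‖₁} ‖Aᵀ(Ax−b) + λξ‖_∞`. -/
noncomputable def omega {m n : ℕ} (A : Matrix (Fin m) (Fin n) ℝ) (b : Fin m → ℝ)
    (lam : ℝ) (x : Fin n → ℝ) : ℝ :=
  sInf {r | ∃ ξ : Fin n → ℝ, IsSubgrad x ξ ∧
    r = linf (fun i => grad A b x i + lam * ξ i)}

/-- The local model `ψ_{λ,L}(y; x)`. -/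
def psi {m n : ℕ} (A : Matrix (Fin m) (Fin n) ℝ) (b : Fin m → ℝ) (lam L : ℝ)
    (y x : Fin n → ℝ) : ℝ :=
  fls A b y + dot (grad A b y) (x - y) + L / 2 * sqnorm (x - y) + lam * l1 x

/-- The noise-domination condition
`λ ≥ max{4, (γ+1)/((1−δ')γ−(1+δ'))} ⬝ ‖Aᵀz‖_∞`. -/
def noiseCond {m n : ℕ} (A : Matrix (Fin m) (Fin n) ℝ) (z : Fin m → ℝ)
    (dp gam lam : ℝ) : Prop :=
  lam ≥ max 4 ((gam + 1) / ((1 - dp) * gam - (1 + dp))) * linf (Aᵀ.mulVec z)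

/-!
Both `x̂` and `x*` satisfy the first-order inequality
`⟨∇f(x), x - y⟩ ≤ λ(‖y‖₁ - ‖x‖₁) + e‖x - y‖₁` for all `y` (with `e = ε` and `e = 0`):
for `x̂` because the infimum defining `ω_λ(x̂)` is attained, for `x*` by letting `t → 0` in
`φ_λ(x*) ≤ φ_λ(x* + t(y - x*))`. Taking `y = x̄`, and using that `∇f(x) - ∇f(x̄) = AᵀA(x - x̄)`
and `∇f(x̄) = -Aᵀz`, gives
`‖A(x - x̄)‖² ≤ (λ+e+ν)‖Δ_S̄‖₁ - (λ-e-ν)‖Δ_S̄ᶜ‖₁` with `Δ = x - x̄` and `ν = ‖Aᵀz‖_∞`.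
The noise condition turns this into the cone condition `‖Δ_S̄ᶜ‖₁ ≤ γ‖Δ_S̄‖₁`, and the
restricted eigenvalue together with Cauchy–Schwarz on `S̄` gives `‖Δ‖₁ ≤ (1+γ)(λ+e+ν)s̄/ρ₋`.
Finally `φ_λ(x̂) - φ_λ(x*) ≤ ε‖x̂ - x*‖₁`, and the triangle inequality through `x̄` finishes.
-/

section Vectors

variable {n : ℕ}

theorem dot_eq_dotProduct (x y : Fin n → ℝ) : dot x y = x ⬝ᵥ y := rfl

theorem sqnorm_eq_dotProduct (x : Fin n → ℝ) : sqnorm x = x ⬝ᵥ x := by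
  simp [sqnorm, dotProduct, sq]

theorem sqnorm_nonneg (x : Fin n → ℝ) : 0 ≤ sqnorm x :=
  Finset.sum_nonneg fun _ _ => sq_nonneg _

theorem abs_le_linf (x : Fin n → ℝ) (i : Fin n) : |x i| ≤ linf x :=
  le_ciSup (f := fun j => |x j|) (Set.finite_range _).bddAbove i

theorem linf_nonneg (x : Fin n → ℝ) : 0 ≤ linf x :=
  Real.iSup_nonneg fun _ => abs_nonneg _

theorem dot_le_mul_l1 {u : Fin n → ℝ} {c : ℝ} (hu : ∀ i, |u i| ≤ c) (v : Fin n → ℝ) :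
    dot u v ≤ c * l1 v := by
  rw [dot, l1, Finset.mul_sum]
  refine Finset.sum_le_sum fun i _ => ?_
  calc u i * v i ≤ |u i| * |v i| := (le_abs_self _).trans (abs_mul _ _).le
    _ ≤ c * |v i| := by gcongr; exact hu i

theorem l1on_nonneg (S : Finset (Fin n)) (x : Fin n → ℝ) : 0 ≤ l1on S x :=
  Finset.sum_nonneg fun _ _ => abs_nonneg _

theorem l1_eq_l1on_add_l1on_compl (S : Finset (Fin n)) (x : Fin n → ℝ) :
    l1 x = l1on S x + l1on Sᶜ x := by
  rw [l1, l1on, l1on, Finset.sum_add_sum_compl]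

theorem l1_sub_le_add (x y w : Fin n → ℝ) : l1 (x - y) ≤ l1 (x - w) + l1 (y - w) := by
  rw [l1, l1, l1, ← Finset.sum_add_distrib]
  refine Finset.sum_le_sum fun i _ => ?_
  simpa only [Pi.sub_apply, abs_sub_comm (w i) (y i)] using abs_sub_le (x i) (w i) (y i)

theorem l1_add_smul_sub_le (x y : Fin n → ℝ) {t : ℝ} (ht0 : 0 ≤ t) (ht1 : t ≤ 1) :
    l1 (x + t • (y - x)) ≤ l1 x + t * (l1 y - l1 x) := by
  have hconv : ∀ i, |x i + t * (y i - x i)| ≤ (1 - t) * |x i| + t * |y i| := fun i => by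
    calc |x i + t * (y i - x i)| = |(1 - t) * x i + t * y i| := by ring_nf
      _ ≤ |(1 - t) * x i| + |t * y i| := abs_add_le _ _
      _ = (1 - t) * |x i| + t * |y i| := by
        rw [abs_mul, abs_mul, abs_of_nonneg ht0, abs_of_nonneg (sub_nonneg.2 ht1)]
  calc l1 (x + t • (y - x)) ≤ ∑ i, ((1 - t) * |x i| + t * |y i|) :=
        Finset.sum_le_sum fun i _ => hconv i
    _ = l1 x + t * (l1 y - l1 x) := by
        rw [Finset.sum_add_distrib, ← Finset.mul_sum, ← Finset.mul_sum, l1, l1]; ring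

theorem l1_sub_l1_le (xbar x : Fin n → ℝ) :
    l1 xbar - l1 x ≤ l1on (supp xbar) (x - xbar) - l1on (supp xbar)ᶜ (x - xbar) := by
  have hS : ∀ i ∈ supp xbar, |xbar i| - |x i| ≤ |(x - xbar) i| := fun i _ => by
    simpa only [Pi.sub_apply, abs_sub_comm (x i)] using abs_sub_abs_le_abs_sub (xbar i) (x i)
  have hSc : ∀ i ∈ (supp xbar)ᶜ, |xbar i| - |x i| = -|(x - xbar) i| := fun i hi => by
    have hxbar : xbar i = 0 := by simpa [supp] using hi
    simp [hxbar]
  calc l1 xbar - l1 x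
      = ∑ i ∈ supp xbar, (|xbar i| - |x i|) + ∑ i ∈ (supp xbar)ᶜ, (|xbar i| - |x i|) := by
        rw [Finset.sum_add_sum_compl, Finset.sum_sub_distrib, l1, l1]
    _ ≤ l1on (supp xbar) (x - xbar) - l1on (supp xbar)ᶜ (x - xbar) := by
        rw [Finset.sum_congr rfl hSc, Finset.sum_neg_distrib, ← sub_eq_add_neg, l1on, l1on]
        exact sub_le_sub_right (Finset.sum_le_sum hS) _

theorem l1on_sq_le_card_mul_sqnorm (S : Finset (Fin n)) (x : Fin n → ℝ) :
    l1on S x ^ 2 ≤ S.card * sqnorm x :=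
  calc l1on S x ^ 2 ≤ S.card * ∑ i ∈ S, |x i| ^ 2 := sq_sum_le_card_mul_sum_sq
    _ ≤ S.card * sqnorm x := by
        gcongr
        simp only [sq_abs, sqnorm]
        exact Finset.sum_le_sum_of_subset_of_nonneg (Finset.subset_univ S)
          fun i _ _ => sq_nonneg _

theorem l0_sub_le (xbar x : Fin n → ℝ) :
    l0 (x - xbar) ≤ (supp xbar).card + l0on (supp xbar)ᶜ x := by
  have hsub : supp (x - xbar) ⊆ supp xbar ∪ (supp xbar)ᶜ.filter (fun i => x i ≠ 0) := by
    intro i hi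
    by_cases hxbar : xbar i = 0
    · simp_all [supp]
    · simp [supp, hxbar]
  exact (Finset.card_le_card hsub).trans (Finset.card_union_le _ _)

theorem IsSubgrad.abs_le_one {x ξ : Fin n → ℝ} (hξ : IsSubgrad x ξ) (i : Fin n) :
    |ξ i| ≤ 1 := by
  by_cases hx : x i = 0
  · exact (hξ i).2 hx
  · rcases Real.sign_apply_eq_of_ne_zero _ hx with h | h <;> simp [(hξ i).1 hx, h]

theorem IsSubgrad.mul_eq_abs {x ξ : Fin n → ℝ} (hξ : IsSubgrad x ξ) (i : Fin n) :
    ξ i * x i = |x i| := by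
  rcases lt_trichotomy (x i) 0 with hx | hx | hx
  · simp [(hξ i).1 hx.ne, Real.sign_of_neg hx, abs_of_neg hx]
  · simp [hx]
  · simp [(hξ i).1 hx.ne', Real.sign_of_pos hx, abs_of_pos hx]

theorem IsSubgrad.l1_add_dot_le {x ξ : Fin n → ℝ} (hξ : IsSubgrad x ξ) (y : Fin n → ℝ) :
    l1 x + dot ξ (y - x) ≤ l1 y := by
  rw [l1, l1, dot, ← Finset.sum_add_distrib]
  refine Finset.sum_le_sum fun i _ => ?_
  calc |x i| + ξ i * (y - x) i = ξ i * y i := by rw [Pi.sub_apply, ← hξ.mul_eq_abs]; ring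
    _ ≤ |ξ i| * |y i| := (le_abs_self _).trans (abs_mul _ _).le
    _ ≤ |y i| := mul_le_of_le_one_left (abs_nonneg _) (hξ.abs_le_one i)

end Vectors

section LeastSquares

variable {m n : ℕ} (A : Matrix (Fin m) (Fin n) ℝ) (b : Fin m → ℝ)

theorem fls_eq_add_dot_grad (x y : Fin n → ℝ) :
    fls A b y = fls A b x + dot (grad A b x) (y - x) + sqnorm (A *ᵥ (y - x)) / 2 := by
  have hres : A *ᵥ y - b = (A *ᵥ x - b) + A *ᵥ (y - x) := by rw [mulVec_sub]; abel
  simp only [fls, grad, dot_eq_dotProduct, sqnorm_eq_dotProduct, hres, mulVec_transpose,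
    ← dotProduct_mulVec, add_dotProduct, dotProduct_add, dotProduct_comm (A *ᵥ (y - x))]
  ring

theorem dot_grad_sub_grad (x y : Fin n → ℝ) :
    dot (grad A b x - grad A b y) (x - y) = sqnorm (A *ᵥ (x - y)) := by
  rw [grad, grad, ← mulVec_sub, sub_sub_sub_cancel_right, ← mulVec_sub, dot_eq_dotProduct,
    sqnorm_eq_dotProduct, mulVec_transpose, ← dotProduct_mulVec]

theorem grad_eq_neg_of_eq_mulVec_add {xbar : Fin n → ℝ} {z : Fin m → ℝ}
    (hb : b = A *ᵥ xbar + z) : grad A b xbar = -(Aᵀ *ᵥ z) := by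
  rw [grad, hb, sub_add_cancel_left, mulVec_neg]

theorem rhoMinus_mul_sqnorm_le {s : ℕ} {x : Fin n → ℝ} (hx : l0 x ≤ s) :
    rhoMinus A s * sqnorm x ≤ sqnorm (A *ᵥ x) := by
  rcases eq_or_ne x 0 with rfl | hx0
  · simp [sqnorm]
  have hpos : 0 < sqnorm x := by
    obtain ⟨i, hi⟩ := Function.ne_iff.mp hx0
    exact lt_of_lt_of_le (pow_two_pos_of_ne_zero hi) (Finset.single_le_sum
      (f := fun j => x j ^ 2) (fun j _ => sq_nonneg _) (Finset.mem_univ i))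
  have hbdd : BddBelow {r | ∃ y : Fin n → ℝ, y ≠ 0 ∧ l0 y ≤ s ∧
      r = sqnorm (A *ᵥ y) / sqnorm y} :=
    ⟨0, by rintro _ ⟨y, -, -, rfl⟩; exact div_nonneg (sqnorm_nonneg _) (sqnorm_nonneg _)⟩
  rw [← le_div_iff₀ hpos]
  exact csInf_le hbdd ⟨x, hx0, hx, rfl⟩

end LeastSquares

section Stationarity

variable {m n : ℕ} {A : Matrix (Fin m) (Fin n) ℝ} {b : Fin m → ℝ} {lam e : ℝ}

def IsApproxStationary (A : Matrix (Fin m) (Fin n) ℝ) (b : Fin m → ℝ) (lam e : ℝ)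
    (x : Fin n → ℝ) : Prop :=
  ∀ y, dot (grad A b x) (x - y) ≤ lam * (l1 y - l1 x) + e * l1 (x - y)

theorem IsApproxStationary.phi_sub_le {x : Fin n → ℝ} (hx : IsApproxStationary A b lam e x)
    (y : Fin n → ℝ) : phi A b lam x - phi A b lam y ≤ e * l1 (x - y) := by
  have hdot : dot (grad A b x) (y - x) = -dot (grad A b x) (x - y) := by
    rw [← neg_sub, dot_eq_dotProduct, dotProduct_neg, dot_eq_dotProduct]
  have hstat := hx y
  have hcurv := sqnorm_nonneg (A *ᵥ (y - x))
  rw [phi, phi, fls_eq_add_dot_grad A b x y, hdot]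
  linarith

theorem isApproxStationary_of_isSubgrad (hlam : 0 ≤ lam) {x ξ : Fin n → ℝ}
    (hξ : IsSubgrad x ξ) (hres : ∀ i, |grad A b x i + lam * ξ i| ≤ e) :
    IsApproxStationary A b lam e x := by
  intro y
  have hsplit : dot (grad A b x) (x - y) =
      dot (fun i => grad A b x i + lam * ξ i) (x - y) + lam * dot ξ (y - x) := by
    simp only [dot, Pi.sub_apply, Finset.mul_sum, ← Finset.sum_add_distrib]
    exact Finset.sum_congr rfl fun i _ => by ring
  have hsub : lam * dot ξ (y - x) ≤ lam * (l1 y - l1 x) :=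
    mul_le_mul_of_nonneg_left (by linarith [hξ.l1_add_dot_le y]) hlam
  linarith [dot_le_mul_l1 hres (x - y)]

theorem exists_isSubgrad_residual_le_of_omega_le {x : Fin n → ℝ}
    (hx : omega A b lam x ≤ e) :
    ∃ ξ, IsSubgrad x ξ ∧ ∀ i, |grad A b x i + lam * ξ i| ≤ e := by
  -- The residue is lower semicontinuous on the compact set of subgradients, so `ω` is attained.
  set residue : (Fin n → ℝ) → ℝ := fun ξ => linf fun i => grad A b x i + lam * ξ i
  set T : Fin n → Set ℝ := fun i => if x i = 0 then Set.Icc (-1) 1 else {Real.sign (x i)}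
  have hT : {ξ | IsSubgrad x ξ} = Set.univ.pi T := by
    ext ξ
    simp only [Set.mem_pi, Set.mem_univ, true_implies, IsSubgrad, T]
    refine forall_congr' fun i => ?_
    by_cases hxi : x i = 0 <;> simp [hxi, abs_le]
  have hcompact : IsCompact {ξ | IsSubgrad x ξ} := by
    rw [hT]
    refine isCompact_univ_pi fun i => ?_
    by_cases hxi : x i = 0 <;> simp [T, hxi, isCompact_Icc]
  have hne : {ξ | IsSubgrad x ξ}.Nonempty := by
    rw [hT]
    refine Set.univ_pi_nonempty_iff.2 fun i => ?_
    by_cases hxi : x i = 0 <;> simp [T, hxi]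
  have hlsc : LowerSemicontinuous residue :=
    lowerSemicontinuous_ciSup (fun _ => (Set.finite_range _).bddAbove) fun i =>
      (by fun_prop : Continuous fun ξ : Fin n → ℝ => |grad A b x i + lam * ξ i|)
        |>.lowerSemicontinuous
  obtain ⟨ξ, hξ, hmin⟩ := hlsc.lowerSemicontinuousOn _ |>.exists_isMinOn hne hcompact
  have hresidue : residue ξ ≤ omega A b lam x :=
    le_csInf ⟨_, ξ, hξ, rfl⟩ fun _ ⟨η, hη, hr⟩ => hr ▸ hmin hη
  exact ⟨ξ, hξ, fun i => (abs_le_linf _ i).trans (hresidue.trans hx)⟩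

theorem isApproxStationary_of_omega_le (hlam : 0 ≤ lam) {x : Fin n → ℝ}
    (hx : omega A b lam x ≤ e) : IsApproxStationary A b lam e x :=
  let ⟨_, hξ, hres⟩ := exists_isSubgrad_residual_le_of_omega_le hx
  isApproxStationary_of_isSubgrad hlam hξ hres

theorem nonneg_of_forall_add_mul_nonneg {D K : ℝ} (hK : 0 ≤ K)
    (h : ∀ t, 0 < t → t ≤ 1 → 0 ≤ D + t * K) : 0 ≤ D := by
  refine le_of_forall_pos_le_add fun ε hε => ?_
  set t := min 1 (ε / (K + 1))
  have htK : t * K ≤ ε :=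
    calc t * K ≤ ε / (K + 1) * K := by gcongr; exact min_le_right _ _
      _ ≤ ε := by rw [div_mul_eq_mul_div, div_le_iff₀ (by positivity)]; nlinarith
  linarith [h t (lt_min one_pos (by positivity)) (min_le_left _ _)]

theorem isApproxStationary_zero_of_forall_phi_le (hlam : 0 ≤ lam) {x : Fin n → ℝ}
    (hmin : ∀ u, phi A b lam x ≤ phi A b lam u) : IsApproxStationary A b lam 0 x := by
  intro y
  have hdot : dot (grad A b x) (x - y) = -dot (grad A b x) (y - x) := by
    rw [← neg_sub, dot_eq_dotProduct, dotProduct_neg, dot_eq_dotProduct]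
  rw [zero_mul, add_zero, hdot, neg_le_iff_add_nonneg']
  refine nonneg_of_forall_add_mul_nonneg (div_nonneg (sqnorm_nonneg (A *ᵥ (y - x))) zero_le_two)
    fun t ht0 ht1 => ?_
  have hexp := fls_eq_add_dot_grad A b x (x + t • (y - x))
  rw [add_sub_cancel_left, mulVec_smul, dot_eq_dotProduct, sqnorm_eq_dotProduct,
    dotProduct_smul, smul_dotProduct, dotProduct_smul, ← dot_eq_dotProduct,
    ← sqnorm_eq_dotProduct] at hexp
  have hl1 := mul_le_mul_of_nonneg_left (l1_add_smul_sub_le x y ht0.le ht1) hlam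
  have hdecrease := hmin (x + t • (y - x))
  simp only [phi, smul_eq_mul] at hdecrease hexp
  refine nonneg_of_mul_nonneg_right (a := t) ?_ ht0
  nlinarith

end Stationarity

section Recovery

variable {m n : ℕ} {A : Matrix (Fin m) (Fin n) ℝ} {b : Fin m → ℝ} {xbar x : Fin n → ℝ}
  {z : Fin m → ℝ} {lam e : ℝ}

theorem sqnorm_mulVec_sub_le (hb : b = A *ᵥ xbar + z) (hlam : 0 ≤ lam)
    (hx : IsApproxStationary A b lam e x) :
    sqnorm (A *ᵥ (x - xbar)) ≤
      (lam + e + linf (Aᵀ *ᵥ z)) * l1on (supp xbar) (x - xbar)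
        - (lam - e - linf (Aᵀ *ᵥ z)) * l1on (supp xbar)ᶜ (x - xbar) := by
  have hcurv : sqnorm (A *ᵥ (x - xbar)) =
      dot (grad A b x) (x - xbar) + dot (Aᵀ *ᵥ z) (x - xbar) := by
    rw [← dot_grad_sub_grad, grad_eq_neg_of_eq_mulVec_add A b hb, sub_neg_eq_add,
      dot_eq_dotProduct, add_dotProduct]
    rfl
  have hnoise := dot_le_mul_l1 (abs_le_linf (Aᵀ *ᵥ z)) (x - xbar)
  have hl1 := mul_le_mul_of_nonneg_left (l1_sub_l1_le xbar x) hlam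
  have hsplit := l1_eq_l1on_add_l1on_compl (supp xbar) (x - xbar)
  rw [hsplit] at hnoise
  have hstat := hx xbar
  rw [hsplit] at hstat
  nlinarith

theorem l1_le_of_cone {S : Finset (Fin n)} {Δ : Fin n → ℝ} {ρ Q a c γ : ℝ} (hρ : 0 < ρ)
    (ha : 0 ≤ a) (hc : 0 < c) (hγ : 0 ≤ γ) (hac : a ≤ γ * c)
    (hre : ρ * sqnorm Δ ≤ Q) (hQ : Q ≤ a * l1on S Δ - c * l1on Sᶜ Δ) :
    l1 Δ ≤ (1 + γ) * (a * S.card / ρ) := by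
  have hS := l1on_nonneg S Δ
  have hSc := l1on_nonneg Sᶜ Δ
  have hQ0 : 0 ≤ Q := (mul_nonneg hρ.le (sqnorm_nonneg Δ)).trans hre
  have hcone : l1on Sᶜ Δ ≤ γ * l1on S Δ := by
    refine le_of_mul_le_mul_left ?_ hc
    nlinarith [mul_le_mul_of_nonneg_right hac hS]
  have hsupport : l1on S Δ ≤ a * S.card / ρ := by
    rw [le_div_iff₀ hρ]
    have hcs := l1on_sq_le_card_mul_sqnorm S Δ
    have : ρ * l1on S Δ ^ 2 ≤ S.card * (a * l1on S Δ) := by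
      nlinarith [mul_le_mul_of_nonneg_left hcs hρ.le, mul_nonneg hc.le hSc,
        (Nat.cast_nonneg S.card : (0 : ℝ) ≤ S.card)]
    rcases hS.eq_or_lt with h0 | hpos
    · rw [← h0, zero_mul]; positivity
    · nlinarith
  rw [l1_eq_l1on_add_l1on_compl S]
  nlinarith

theorem l1_sub_le_of_isApproxStationary (hb : b = A *ᵥ xbar + z) {s : ℕ}
    (hrho : 0 < rhoMinus A ((supp xbar).card + s)) (hsp : l0on (supp xbar)ᶜ x ≤ s)
    (hx : IsApproxStationary A b lam e x) (hlam : 0 < lam) (he : 0 ≤ e) {γ : ℝ} (hγ : 0 ≤ γ)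
    (hcone : lam + e + linf (Aᵀ *ᵥ z) ≤ γ * (lam - e - linf (Aᵀ *ᵥ z))) :
    l1 (x - xbar) ≤ (1 + γ) * ((lam + e + linf (Aᵀ *ᵥ z)) * (supp xbar).card /
      rhoMinus A ((supp xbar).card + s)) := by
  have hν := linf_nonneg (Aᵀ *ᵥ z)
  have hc : 0 < lam - e - linf (Aᵀ *ᵥ z) := by
    by_contra! hc
    nlinarith [mul_nonpos_of_nonneg_of_nonpos hγ hc]
  have hre := rhoMinus_mul_sqnorm_le A ((l0_sub_le xbar x).trans (Nat.add_le_add_left hsp _))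
  exact l1_le_of_cone hrho (by positivity) hc hγ hcone hre (sqnorm_mulVec_sub_le hb hlam.le hx)

end Recovery

section NoiseCondition

variable {m n : ℕ} {A : Matrix (Fin m) (Fin n) ℝ} {z : Fin m → ℝ} {dp gam lam : ℝ}

theorem noiseCond.four_mul_linf_le (h : noiseCond A z dp gam lam) :
    4 * linf (Aᵀ *ᵥ z) ≤ lam :=
  (mul_le_mul_of_nonneg_right (le_max_left _ _) (linf_nonneg _)).trans h

theorem noiseCond.add_le_mul_sub (h : noiseCond A z dp gam lam) (hdp1 : dp < 1)
    (hgam : gam > (1 + dp) / (1 - dp)) {e : ℝ} (he : e ≤ dp * lam) :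
    lam + e + linf (Aᵀ *ᵥ z) ≤ gam * (lam - e - linf (Aᵀ *ᵥ z)) := by
  have hν := linf_nonneg (Aᵀ *ᵥ z)
  have hD : 0 < (1 - dp) * gam - (1 + dp) := by
    have := (div_lt_iff₀ (sub_pos.2 hdp1)).1 hgam
    linarith
  have hnoise : (gam + 1) * linf (Aᵀ *ᵥ z) ≤ ((1 - dp) * gam - (1 + dp)) * lam := by
    have := (mul_le_mul_of_nonneg_right (le_max_right _ _) hν).trans h
    rwa [div_mul_eq_mul_div, div_le_iff₀ hD, mul_comm lam] at this
  nlinarith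

end NoiseCondition

theorem stmt19_general {m n : ℕ} (A : Matrix (Fin m) (Fin n) ℝ) (b : Fin m → ℝ)
    (xbar : Fin n → ℝ) (z : Fin m → ℝ) (hb : b = A.mulVec xbar + z)
    (dp gam : ℝ) (hdp1 : dp < 1)
    (hgam : gam > (1 + dp) / (1 - dp))
    (st : ℕ)
    (hrho : 0 < rhoMinus A ((supp xbar).card + st))
    (lam : ℝ) (hlam : 0 < lam) (hnoise : noiseCond A z dp gam lam)
    (eps : ℝ) (heps0 : 0 ≤ eps) (heps1 : eps ≤ dp * lam)
    (xhat : Fin n → ℝ) (hsp : l0on (supp xbar)ᶜ xhat ≤ st)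
    (homega : omega A b lam xhat ≤ eps)
    (xstar : Fin n → ℝ) (hmin : ∀ u, phi A b lam xstar ≤ phi A b lam u)
    (hspstar : l0on (supp xbar)ᶜ xstar ≤ st) :
    phi A b lam xhat - phi A b lam xstar ≤
      4 * (1 + gam) * lam * ((supp xbar).card : ℝ) * eps /
        rhoMinus A ((supp xbar).card + st) := by
  set ν := linf (Aᵀ *ᵥ z)
  set ρ := rhoMinus A ((supp xbar).card + st)
  set s : ℝ := ((supp xbar).card : ℝ)
  have hdp0 : 0 ≤ dp := nonneg_of_mul_nonneg_left (heps0.trans heps1) hlam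
  have hgam0 : 0 ≤ gam := (div_nonneg (by linarith) (by linarith)).trans hgam.le
  have hhat := isApproxStationary_of_omega_le hlam.le homega
  have hstar := isApproxStationary_zero_of_forall_phi_le hlam.le hmin
  have hhat_near := l1_sub_le_of_isApproxStationary hb hrho hsp hhat hlam heps0 hgam0
    (hnoise.add_le_mul_sub hdp1 hgam heps1)
  have hstar_near := l1_sub_le_of_isApproxStationary hb hrho hspstar hstar hlam le_rfl hgam0
    (hnoise.add_le_mul_sub hdp1 hgam (mul_nonneg hdp0 hlam.le))
  have heps_le : eps ≤ lam := heps1.trans (mul_le_of_le_one_left hlam.le (by linarith))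
  have hν := hnoise.four_mul_linf_le
  calc phi A b lam xhat - phi A b lam xstar ≤ eps * l1 (xhat - xstar) := hhat.phi_sub_le xstar
    _ ≤ eps * (l1 (xhat - xbar) + l1 (xstar - xbar)) := by gcongr; exact l1_sub_le_add _ _ _
    _ ≤ eps * ((1 + gam) * ((lam + eps + ν) * s / ρ) + (1 + gam) * ((lam + 0 + ν) * s / ρ)) := by
        gcongr
    _ = (1 + gam) * s * eps * (2 * lam + eps + 2 * ν) / ρ := by ring
    _ ≤ (1 + gam) * s * eps * (4 * lam) / ρ := by gcongr; linarith
    _ = 4 * (1 + gam) * lam * s * eps / ρ := by ring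

theorem stmt19 {m n : ℕ} (A : Matrix (Fin m) (Fin n) ℝ) (b : Fin m → ℝ)
    (xbar : Fin n → ℝ) (z : Fin m → ℝ) (hb : b = A.mulVec xbar + z)
    (dp gam : ℝ) (hdp0 : 0 < dp) (hdp1 : dp < 1)
    (hgam : gam > (1 + dp) / (1 - dp))
    (st : ℕ) (hst : 1 ≤ st)
    (hrho : 0 < rhoMinus A ((supp xbar).card + st))
    (lam : ℝ) (hlam : 0 < lam) (hnoise : noiseCond A z dp gam lam)
    (eps : ℝ) (heps0 : 0 ≤ eps) (heps1 : eps ≤ dp * lam)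
    (xhat : Fin n → ℝ) (hsp : l0on (supp xbar)ᶜ xhat ≤ st)
    (homega : omega A b lam xhat ≤ eps)
    (xstar : Fin n → ℝ) (hmin : ∀ u, phi A b lam xstar ≤ phi A b lam u)
    (hspstar : l0on (supp xbar)ᶜ xstar ≤ st) :
    phi A b lam xhat - phi A b lam xstar ≤
      4 * (1 + gam) * lam * ((supp xbar).card : ℝ) * eps /
        rhoMinus A ((supp xbar).card + st) :=
  stmt19_general A b xbar z hb dp gam hdp1 hgam st hrho lam hlam hnoise eps heps0 heps1 xhat hsp
    homega xstar hmin hspstar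

end PGH
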